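/- Let σ_{r-1} : ℤ^r → ℤ^r be the linear map with σ_{r-1}(α_{r-1}) = -α_{r-1}, σ_{r-1}(α_{r-2}) = α_{r-2} + α_{r-1}, σ_{r-1}(α_r) = α_r + α_{r-1}, and σ_{r-1}(α_j) = α_j for all other j. If r-1 ∈ Z, then σ_{r-1}(Φ_{r,Z} ∪ -Φ_{r,Z}) = Ψ_{r,Z∖{r-1}} ∪ -Ψ_{r,Z∖{r-1}}. -/

import Mathlib

/-- The standard basis vector `α_i` of `ℤ^r` (1-indexed). -/
def alphaV (r i : ℕ) : Fin r → ℤ := fun k => if (k : ℕ) + 1 = i then 1 else 0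

/-- `η_{i,j} = α_i + ⋯ + α_j` for `i ≤ j`, and `0` for `i > j` (1-indexed). -/
def eta (r i j : ℕ) : Fin r → ℤ := fun k => if i ≤ (k : ℕ) + 1 ∧ (k : ℕ) + 1 ≤ j then 1 else 0

/-- The root set `Φ_{r,Z}`. -/
def Phi (r : ℕ) (Z : Finset ℕ) : Set (Fin r → ℤ) :=
  {v | ∃ i j, 1 ≤ i ∧ i < j ∧ j ≤ r ∧ v = eta r i (j - 1)} ∪
  {v | ∃ i, 1 ≤ i ∧ i < r ∧ v = eta r i (r - 2) + alphaV r r} ∪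
  {v | ∃ i j, 1 ≤ i ∧ i < j ∧ j < r ∧ v = eta r i r + eta r j (r - 2)} ∪
  {v | ∃ j ∈ Z, v = eta r j r + eta r j (r - 2)}

/-- The root set `Ψ_{r,Y}`. -/
def Psi (r : ℕ) (Y : Finset ℕ) : Set (Fin r → ℤ) :=
  {v | ∃ i j, 1 ≤ i ∧ i ≤ j ∧ j ≤ r ∧ v = eta r i j} ∪
  {v | ∃ i j, 1 ≤ i ∧ i < j ∧ j < r ∧ v = eta r i r + eta r j (r - 1)} ∪
  {v | ∃ j ∈ Y, v = eta r j r + eta r j (r - 1)}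

/-!
`σ_{r-1}` is the simple reflection in `α_{r-1}`: it changes only the `α_{r-1}`-coefficient,
replacing `a_{r-1}` by `a_{r-2} + a_r - a_{r-1}`, so it is an involution. An interval `η_{i,m}` is
fixed unless `m ∈ {r-2, r-1}`, and for `i ≤ r-2` the reflection exchanges `η_{i,r-2}` and
`η_{i,r-1}`. Running through the families, `σ` maps `Φ_{r,Z}` into `±Ψ_{r,Z∖{r-1}}` and
`Ψ_{r,Z∖{r-1}}` into `±Φ_{r,Z}`; the root `α_r` of `Ψ` is the image of `η_{r-1,r}`, which lies in
`Φ_{r,Z}` because `r-1 ∈ Z`. As `σ` is an involution commuting with negation, the two inclusions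
give the equality of the symmetrized sets.
-/

/-- `σ_{r-1}` for `r = n + 4`; coordinate `n + 2` is the coefficient of `α_{r-1}`. -/
def sigmaRm1 (n : ℕ) : (Fin (n + 4) → ℤ) →ₗ[ℤ] Fin (n + 4) → ℤ where
  toFun v k := if (k : ℕ) = n + 2 then v ⟨n + 1, by omega⟩ + v ⟨n + 3, by omega⟩ - v k else v k
  map_add' v w := by ext k; simp only [Pi.add_apply]; split_ifs <;> ring
  map_smul' c v := by
    ext k; simp only [Pi.smul_apply, smul_eq_mul, RingHom.id_apply]; split_ifs <;> ring

theorem sigmaRm1_apply (n : ℕ) (v : Fin (n + 4) → ℤ) (k : Fin (n + 4)) :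
    sigmaRm1 n v k =
      if (k : ℕ) = n + 2 then v ⟨n + 1, by omega⟩ + v ⟨n + 3, by omega⟩ - v k else v k :=
  rfl

theorem sigmaRm1_involutive (n : ℕ) : Function.Involutive (sigmaRm1 n) := by
  intro v
  ext k
  by_cases hk : (k : ℕ) = n + 2
  · rw [show k = ⟨n + 2, by omega⟩ from Fin.ext hk]
    simp [sigmaRm1_apply]
  · simp [sigmaRm1_apply, hk]

theorem alphaV_succ_eq_single (r : ℕ) (i : Fin r) : alphaV r (i + 1) = Pi.single i 1 := by
  ext k
  simp [alphaV, Pi.single_apply, Fin.ext_iff]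

theorem eq_sigmaRm1 (n : ℕ) (σ : (Fin (n + 4) → ℤ) →ₗ[ℤ] Fin (n + 4) → ℤ)
    (h1 : σ (alphaV (n + 4) (n + 3)) = -alphaV (n + 4) (n + 3))
    (h2 : σ (alphaV (n + 4) (n + 2)) = alphaV (n + 4) (n + 2) + alphaV (n + 4) (n + 3))
    (h3 : σ (alphaV (n + 4) (n + 4)) = alphaV (n + 4) (n + 4) + alphaV (n + 4) (n + 3))
    (h4 : ∀ j, 1 ≤ j → j ≤ n + 4 → j ≠ n + 3 → j ≠ n + 2 → j ≠ n + 4 →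
      σ (alphaV (n + 4) j) = alphaV (n + 4) j) :
    σ = sigmaRm1 n := by
  refine (Pi.basisFun ℤ (Fin (n + 4))).ext fun i => ?_
  rw [Pi.basisFun_apply, ← alphaV_succ_eq_single]
  have hi := i.isLt
  obtain hj | hj | hj | hj : (i : ℕ) + 1 = n + 2 ∨ (i : ℕ) + 1 = n + 3 ∨ (i : ℕ) + 1 = n + 4 ∨
      ((i : ℕ) + 1 ≠ n + 3 ∧ (i : ℕ) + 1 ≠ n + 2 ∧ (i : ℕ) + 1 ≠ n + 4) := by omega
  · rw [hj, h2]; ext k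
    simp only [sigmaRm1_apply, alphaV, Pi.add_apply]; split_ifs <;> omega
  · rw [hj, h1]; ext k
    simp only [sigmaRm1_apply, alphaV, Pi.neg_apply]; split_ifs <;> omega
  · rw [hj, h3]; ext k
    simp only [sigmaRm1_apply, alphaV, Pi.add_apply]; split_ifs <;> omega
  · rw [h4 _ (by omega) (by omega) hj.1 hj.2.1 hj.2.2]; ext k
    simp only [sigmaRm1_apply, alphaV]; split_ifs <;> omega

theorem eta_of_lt {r i m : ℕ} (h : m < i) : eta r i m = 0 := by
  ext k; simp only [eta, Pi.zero_apply]; split_ifs <;> omega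

theorem eta_self (r j : ℕ) : eta r j j = alphaV r j := by
  ext k; simp only [eta, alphaV]; split_ifs <;> omega

section Sigma

variable {n i m : ℕ}

theorem sigmaRm1_eta_of_le (hm : m ≤ n + 1) : sigmaRm1 n (eta (n + 4) i m) = eta (n + 4) i m := by
  ext k; simp only [sigmaRm1_apply, eta]; split_ifs <;> omega

theorem sigmaRm1_eta_rm2 (hi : i ≤ n + 2) :
    sigmaRm1 n (eta (n + 4) i (n + 2)) = eta (n + 4) i (n + 3) := by
  ext k; simp only [sigmaRm1_apply, eta]; split_ifs <;> omega

theorem sigmaRm1_eta_rm1 (hi : i ≤ n + 2) :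
    sigmaRm1 n (eta (n + 4) i (n + 3)) = eta (n + 4) i (n + 2) :=
  (sigmaRm1_involutive n).eq_iff.2 (sigmaRm1_eta_rm2 hi).symm

theorem sigmaRm1_eta_r (hi : i ≤ n + 2) :
    sigmaRm1 n (eta (n + 4) i (n + 4)) = eta (n + 4) i (n + 4) := by
  ext k; simp only [sigmaRm1_apply, eta]; split_ifs <;> omega

theorem sigmaRm1_eta_rm1_rm1 :
    sigmaRm1 n (eta (n + 4) (n + 3) (n + 3)) = -eta (n + 4) (n + 3) (n + 3) := by
  ext k; simp only [sigmaRm1_apply, eta, Pi.neg_apply]; split_ifs <;> omega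

theorem sigmaRm1_alphaV_r :
    sigmaRm1 n (alphaV (n + 4) (n + 4)) = eta (n + 4) (n + 3) (n + 4) := by
  ext k; simp only [sigmaRm1_apply, eta, alphaV]; split_ifs <;> omega

theorem sigmaRm1_eta_rm1_r :
    sigmaRm1 n (eta (n + 4) (n + 3) (n + 4)) = alphaV (n + 4) (n + 4) :=
  (sigmaRm1_involutive n).eq_iff.2 sigmaRm1_alphaV_r.symm

theorem sigmaRm1_eta_rm2_add_alphaV_r (hi : i ≤ n + 2) :
    sigmaRm1 n (eta (n + 4) i (n + 2) + alphaV (n + 4) (n + 4)) =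
      eta (n + 4) i (n + 4) + eta (n + 4) (n + 3) (n + 3) := by
  ext k; simp only [sigmaRm1_apply, eta, alphaV, Pi.add_apply]; split_ifs <;> omega

theorem sigmaRm1_eta_r_add_eta_rm1_rm1 (hi : i ≤ n + 2) :
    sigmaRm1 n (eta (n + 4) i (n + 4) + eta (n + 4) (n + 3) (n + 3)) =
      eta (n + 4) i (n + 2) + alphaV (n + 4) (n + 4) :=
  (sigmaRm1_involutive n).eq_iff.2 (sigmaRm1_eta_rm2_add_alphaV_r hi).symm

end Sigma

section Membership

variable {n i j : ℕ} {Y Z : Finset ℕ}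

theorem eta_mem_Psi (hi : 1 ≤ i) (hij : i ≤ j) (hj : j ≤ n + 4) : eta (n + 4) i j ∈ Psi (n + 4) Y :=
  Or.inl (Or.inl ⟨i, j, hi, hij, hj, rfl⟩)

theorem eta_add_eta_mem_Psi (hi : 1 ≤ i) (hij : i < j) (hj : j ≤ n + 3) :
    eta (n + 4) i (n + 4) + eta (n + 4) j (n + 3) ∈ Psi (n + 4) Y :=
  Or.inl (Or.inr ⟨i, j, hi, hij, by omega, rfl⟩)

theorem eta_add_eta_self_mem_Psi (hj : j ∈ Y) :
    eta (n + 4) j (n + 4) + eta (n + 4) j (n + 3) ∈ Psi (n + 4) Y :=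
  Or.inr ⟨j, hj, rfl⟩

theorem eta_mem_Phi (hi : 1 ≤ i) (hij : i ≤ j) (hj : j ≤ n + 3) : eta (n + 4) i j ∈ Phi (n + 4) Z :=
  Or.inl (Or.inl (Or.inl ⟨i, j + 1, hi, by omega, by omega, rfl⟩))

theorem eta_add_alphaV_mem_Phi (hi : 1 ≤ i) (hi' : i ≤ n + 3) :
    eta (n + 4) i (n + 2) + alphaV (n + 4) (n + 4) ∈ Phi (n + 4) Z :=
  Or.inl (Or.inl (Or.inr ⟨i, hi, by omega, rfl⟩))

theorem eta_add_eta_mem_Phi (hi : 1 ≤ i) (hij : i < j) (hj : j ≤ n + 3) :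
    eta (n + 4) i (n + 4) + eta (n + 4) j (n + 2) ∈ Phi (n + 4) Z :=
  Or.inl (Or.inr ⟨i, j, hi, hij, by omega, rfl⟩)

theorem eta_add_eta_self_mem_Phi (hj : j ∈ Z) :
    eta (n + 4) j (n + 4) + eta (n + 4) j (n + 2) ∈ Phi (n + 4) Z :=
  Or.inr ⟨j, hj, rfl⟩

theorem eta_r_mem_Phi (hi : 1 ≤ i) (hi' : i ≤ n + 2) : eta (n + 4) i (n + 4) ∈ Phi (n + 4) Z := by
  simpa [eta_of_lt (i := n + 3) (m := n + 2) (by omega)] using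
    eta_add_eta_mem_Phi (Z := Z) hi (j := n + 3) (by omega) le_rfl

theorem alphaV_r_mem_Phi : alphaV (n + 4) (n + 4) ∈ Phi (n + 4) Z := by
  simpa [eta_of_lt (i := n + 3) (m := n + 2) (by omega)] using
    eta_add_alphaV_mem_Phi (Z := Z) (i := n + 3) (by omega) le_rfl

theorem eta_rm1_r_mem_Phi (h : n + 3 ∈ Z) : eta (n + 4) (n + 3) (n + 4) ∈ Phi (n + 4) Z := by
  simpa [eta_of_lt (i := n + 3) (m := n + 2) (by omega)] using eta_add_eta_self_mem_Phi (n := n) h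

end Membership

theorem image_union_neg_eq_of_involutive {M F : Type*} [AddGroup M] [FunLike F M M]
    [AddMonoidHomClass F M M] {f : F} (hf : Function.Involutive f) {A B : Set M}
    (hAB : Set.MapsTo f A (B ∪ -B)) (hBA : Set.MapsTo f B (A ∪ -A)) :
    f '' (A ∪ -A) = B ∪ -B := by
  have symmetrize : ∀ {S T : Set M}, Set.MapsTo f S (T ∪ -T) → Set.MapsTo f (S ∪ -S) (T ∪ -T) := by
    rintro S T h x (hx | hx)
    · exact h hx
    · simpa [map_neg, or_comm] using h hx
  exact (symmetrize hAB).image_subset.antisymm fun y hy => ⟨f y, symmetrize hBA hy, hf y⟩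

section MapsTo

variable {n : ℕ} {Z : Finset ℕ}

theorem mapsTo_sigmaRm1_Phi (hZ : Z ⊆ Finset.Icc 1 (n + 3)) :
    Set.MapsTo (sigmaRm1 n) (Phi (n + 4) Z)
      (Psi (n + 4) (Z.erase (n + 3)) ∪ -Psi (n + 4) (Z.erase (n + 3))) := by
  intro v hv
  simp only [Phi, Set.mem_union, Set.mem_ofPred_eq, Nat.reduceSubDiff] at hv
  rcases hv with (((⟨i, j, hi, hij, hj, rfl⟩ | ⟨i, hi, hir, rfl⟩) | ⟨i, j, hi, hij, hj, rfl⟩) |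
    ⟨j, hjZ, rfl⟩)
  · obtain hm | hm | ⟨hm, hi'⟩ | ⟨hm, rfl⟩ : j - 1 ≤ n + 1 ∨ j - 1 = n + 2 ∨
        (j - 1 = n + 3 ∧ i ≤ n + 2) ∨ (j - 1 = n + 3 ∧ i = n + 3) := by omega
    · rw [sigmaRm1_eta_of_le hm]; exact Or.inl (eta_mem_Psi hi (by omega) (by omega))
    · rw [hm, sigmaRm1_eta_rm2 (by omega)]; exact Or.inl (eta_mem_Psi hi (by omega) (by omega))
    · rw [hm, sigmaRm1_eta_rm1 hi']; exact Or.inl (eta_mem_Psi hi hi' (by omega))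
    · rw [hm, sigmaRm1_eta_rm1_rm1]
      exact Or.inr (by simpa using eta_mem_Psi (n := n) (by omega) le_rfl (by omega))
  · obtain hi' | rfl : i ≤ n + 2 ∨ i = n + 3 := by omega
    · rw [sigmaRm1_eta_rm2_add_alphaV_r hi']
      exact Or.inl (eta_add_eta_mem_Psi hi (by omega) le_rfl)
    · rw [eta_of_lt (by omega), zero_add, sigmaRm1_alphaV_r]
      exact Or.inl (eta_mem_Psi (by omega) (by omega) le_rfl)
  · obtain hj' | rfl : j ≤ n + 2 ∨ j = n + 3 := by omega
    · rw [map_add, sigmaRm1_eta_r (by omega), sigmaRm1_eta_rm2 hj']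
      exact Or.inl (eta_add_eta_mem_Psi hi hij (by omega))
    · rw [eta_of_lt (i := n + 3) (m := n + 2) (by omega), add_zero, sigmaRm1_eta_r (by omega)]
      exact Or.inl (eta_mem_Psi hi (by omega) le_rfl)
  · obtain ⟨hj, hjr⟩ := Finset.mem_Icc.1 (hZ hjZ)
    obtain hj' | rfl : j ≤ n + 2 ∨ j = n + 3 := by omega
    · rw [map_add, sigmaRm1_eta_r hj', sigmaRm1_eta_rm2 hj']
      exact Or.inl (eta_add_eta_self_mem_Psi (Finset.mem_erase.2 ⟨by omega, hjZ⟩))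
    · rw [eta_of_lt (i := n + 3) (m := n + 2) (by omega), add_zero, sigmaRm1_eta_rm1_r, ← eta_self]
      exact Or.inl (eta_mem_Psi (by omega) le_rfl le_rfl)

theorem mapsTo_sigmaRm1_Psi (hZ : Z ⊆ Finset.Icc 1 (n + 3)) (hZ' : n + 3 ∈ Z) :
    Set.MapsTo (sigmaRm1 n) (Psi (n + 4) (Z.erase (n + 3))) (Phi (n + 4) Z ∪ -Phi (n + 4) Z) := by
  intro v hv
  simp only [Psi, Set.mem_union, Set.mem_ofPred_eq, Nat.reduceSubDiff] at hv
  rcases hv with ((⟨i, j, hi, hij, hj, rfl⟩ | ⟨i, j, hi, hij, hj, rfl⟩) | ⟨j, hjY, rfl⟩)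
  · obtain hj' | rfl | ⟨rfl, hi'⟩ | ⟨rfl, rfl⟩ | ⟨rfl, hi'⟩ | ⟨rfl, rfl⟩ | ⟨rfl, rfl⟩ :
        j ≤ n + 1 ∨ j = n + 2 ∨ (j = n + 3 ∧ i ≤ n + 2) ∨ (j = n + 3 ∧ i = n + 3) ∨
        (j = n + 4 ∧ i ≤ n + 2) ∨ (j = n + 4 ∧ i = n + 3) ∨ (j = n + 4 ∧ i = n + 4) := by omega
    · rw [sigmaRm1_eta_of_le hj']; exact Or.inl (eta_mem_Phi hi hij (by omega))
    · rw [sigmaRm1_eta_rm2 hij]; exact Or.inl (eta_mem_Phi hi (by omega) le_rfl)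
    · rw [sigmaRm1_eta_rm1 hi']; exact Or.inl (eta_mem_Phi hi hi' (by omega))
    · rw [sigmaRm1_eta_rm1_rm1]
      exact Or.inr (by simpa using eta_mem_Phi (n := n) (Z := Z) hi le_rfl le_rfl)
    · rw [sigmaRm1_eta_r hi']; exact Or.inl (eta_r_mem_Phi hi hi')
    · rw [sigmaRm1_eta_rm1_r]; exact Or.inl alphaV_r_mem_Phi
    · rw [eta_self, sigmaRm1_alphaV_r]; exact Or.inl (eta_rm1_r_mem_Phi hZ')
  · obtain hj' | rfl : j ≤ n + 2 ∨ j = n + 3 := by omega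
    · rw [map_add, sigmaRm1_eta_r (by omega), sigmaRm1_eta_rm1 hj']
      exact Or.inl (eta_add_eta_mem_Phi hi hij (by omega))
    · rw [sigmaRm1_eta_r_add_eta_rm1_rm1 (by omega)]
      exact Or.inl (eta_add_alphaV_mem_Phi hi (by omega))
  · obtain ⟨hjr, hjZ⟩ := Finset.mem_erase.1 hjY
    have hj' : j ≤ n + 2 := by have := (Finset.mem_Icc.1 (hZ hjZ)).2; omega
    rw [map_add, sigmaRm1_eta_r hj', sigmaRm1_eta_rm1 hj']
    exact Or.inl (eta_add_eta_self_mem_Phi hjZ)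

end MapsTo

theorem sigma_rm1_phi (r : ℕ) (hr : 4 ≤ r) (Z : Finset ℕ) (hZ : Z ⊆ Finset.Icc 1 (r - 1))
    (hZ' : r - 1 ∈ Z)
    (σ : (Fin r → ℤ) →ₗ[ℤ] (Fin r → ℤ))
    (h1 : σ (alphaV r (r - 1)) = -alphaV r (r - 1))
    (h2 : σ (alphaV r (r - 2)) = alphaV r (r - 2) + alphaV r (r - 1))
    (h3 : σ (alphaV r r) = alphaV r r + alphaV r (r - 1))
    (h4 : ∀ j, 1 ≤ j → j ≤ r → j ≠ r - 1 → j ≠ r - 2 → j ≠ r → σ (alphaV r j) = alphaV r j) :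
    σ '' (Phi r Z ∪ -Phi r Z) =
      Psi r (Z.erase (r - 1)) ∪ -Psi r (Z.erase (r - 1)) := by
  obtain ⟨n, rfl⟩ : ∃ n, r = n + 4 := ⟨r - 4, by omega⟩
  simp only [Nat.reduceSubDiff] at hZ hZ' h1 h2 h3 h4 ⊢
  obtain rfl := eq_sigmaRm1 n σ h1 h2 h3 h4
  exact image_union_neg_eq_of_involutive (sigmaRm1_involutive n)
    (mapsTo_sigmaRm1_Phi hZ) (mapsTo_sigmaRm1_Psi hZ hZ')
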